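/- arXiv:1701.00267 — 2 statements merged into one kernel-verified Lean document; each statement's English description precedes it below -/
import Mathlib

section
/- Suppose λ_α satisfies λ_α = (∫_Ω |∇u|²/(c+α) dx) / (∫_Ω u²·(-div(∇c/(c+α)²)) dx) for a positive eigenfunction u with ∫_Ω|∇u|² = α and the denominator positive. Then λ_α ≥ √λ₁ (c_L+α)² / (2‖∇c‖_∞ (c_M+α)). -/
open MeasureTheory Real Set

noncomputable def vdiv {N : ℕ} (V : EuclideanSpace ℝ (Fin N) → EuclideanSpace ℝ (Fin N))
    (x : EuclideanSpace ℝ (Fin N)) : ℝ :=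
  ∑ i, fderiv ℝ V x (EuclideanSpace.single i 1) i

noncomputable def lap {N : ℕ} (f : EuclideanSpace ℝ (Fin N) → ℝ)
    (x : EuclideanSpace ℝ (Fin N)) : ℝ :=
  vdiv (fun y => gradient f y) x

open Filter Topology Bornology Asymptotics

/-! The extension by zero of `u² • V`, where `V = ∇c / (c + α)²`, is differentiable everywhere:
near a boundary point `x` it is `O(‖y - x‖²)`, because `u` is differentiable up to the boundary
and vanishes there. The divergence theorem on a large box therefore gives
`∫ u² (-div V) = ∫ 2 u ⟪∇u, V⟫`. With `‖V‖ ≤ ‖∇c‖_∞ / (c_L + α)²`, Young's inequality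
`2 |u| ‖∇u‖ ≤ √λ₁ u² + ‖∇u‖² / √λ₁` and the Poincaré inequality, the denominator is at most
`2 ‖∇c‖_∞ α / (√λ₁ (c_L + α)²)`, while the numerator is at least `α / (c_M + α)`. -/

theorem integral_divergence_eq_zero_of_isBounded {n : ℕ}
    {f : (Fin (n + 1) → ℝ) → Fin (n + 1) → ℝ}
    {f' : (Fin (n + 1) → ℝ) → (Fin (n + 1) → ℝ) →L[ℝ] Fin (n + 1) → ℝ}
    {s : Set (Fin (n + 1) → ℝ)} (hs : IsBounded s) (hfs : ∀ x ∉ s, f x = 0)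
    (hf : ∀ x, HasFDerivAt f (f' x) x)
    (hi : Integrable fun x => ∑ i, f' x (Pi.single i 1) i) :
    ∫ x, ∑ i, f' x (Pi.single i 1) i = 0 := by
  obtain ⟨R, hR⟩ := hs.subset_closedBall 0
  have hfar : ∀ x, R < ‖x‖ → f x = 0 ∧ f' x = 0 := by
    intro x hx
    have hzero : f =ᶠ[𝓝 x] fun _ => 0 := by
      filter_upwards [(isOpen_lt continuous_const continuous_norm).mem_nhds hx] with y hy
      exact hfs y fun hys => (mem_closedBall_zero_iff.mp (hR hys)).not_gt hy
    exact ⟨hzero.eq_of_nhds, (hf x).unique ((hasFDerivAt_const 0 x).congr_of_eventuallyEq hzero)⟩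
  have hfar_coord : ∀ x i, |R| + 1 ≤ |x i| → f x = 0 ∧ f' x = 0 := fun x i hxi =>
    hfar x (by linarith [le_abs_self R, norm_le_pi_norm x i, Real.norm_eq_abs (x i)])
  set a : Fin (n + 1) → ℝ := fun _ => -(|R| + 1)
  set b : Fin (n + 1) → ℝ := fun _ => |R| + 1
  have hout : ∀ x ∉ Icc a b, ∑ i, f' x (Pi.single i 1) i = 0 := by
    intro x hx
    obtain ⟨i, hi⟩ : ∃ i, |R| + 1 ≤ |x i| := by
      by_contra! h
      exact hx ⟨fun i => (abs_lt.mp (h i)).1.le, fun i => (abs_lt.mp (h i)).2.le⟩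
    simp [(hfar_coord x i hi).2]
  rw [← setIntegral_eq_integral_of_forall_compl_eq_zero hout,
    integral_divergence_of_hasFDerivAt_off_countable a b (fun _ => by linarith [abs_nonneg R])
      f f' ∅ countable_empty (fun x _ => (hf x).continuousAt.continuousWithinAt)
      (fun x _ => hf x) hi.integrableOn]
  refine Finset.sum_eq_zero fun i _ => ?_
  have hface : ∀ (t : ℝ) (y : Fin n → ℝ), |t| = |R| + 1 → f (i.insertNth t y) = 0 :=
    fun t y ht => (hfar_coord _ i (by simp [ht])).1
  have hpos : (0 : ℝ) < |R| + 1 := by positivity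
  have hb : ∀ y, f (i.insertNth (b i) y) = 0 := fun y => hface _ y (abs_of_pos hpos)
  have ha : ∀ y, f (i.insertNth (a i) y) = 0 := fun y =>
    hface _ y (by rw [abs_neg, abs_of_pos hpos])
  simp [ha, hb]

theorem measurable_vdiv {N : ℕ} (V : EuclideanSpace ℝ (Fin N) → EuclideanSpace ℝ (Fin N)) :
    Measurable (vdiv V) :=
  Finset.measurable_sum _ fun i _ =>
    (measurable_pi_apply i).comp
      ((PiLp.continuousLinearEquiv 2 ℝ _).continuous.measurable.comp
        (measurable_fderiv_apply_const ℝ V _))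

theorem integral_vdiv_eq_zero_of_isBounded {N : ℕ}
    {G : EuclideanSpace ℝ (Fin N) → EuclideanSpace ℝ (Fin N)} {s : Set (EuclideanSpace ℝ (Fin N))}
    (hs : IsBounded s) (hGs : ∀ x ∉ s, G x = 0) (hG : Differentiable ℝ G)
    (hi : Integrable (vdiv G)) :
    ∫ x, vdiv G x = 0 := by
  obtain _ | n := N
  · simp [vdiv]
  set e := PiLp.continuousLinearEquiv 2 ℝ fun _ : Fin (n + 1) => ℝ
  have he : MeasurePreserving e.symm := PiLp.volume_preserving_toLp _
  have hdiv : ∀ x, ∑ i, (e.toContinuousLinearMap ∘L fderiv ℝ G (e.symm x) ∘L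
      e.symm.toContinuousLinearMap) (Pi.single i 1) i = vdiv G (e.symm x) := fun _ => rfl
  rw [← he.integral_comp e.symm.toHomeomorph.measurableEmbedding]
  simp only [← hdiv]
  refine integral_divergence_eq_zero_of_isBounded (f := e ∘ G ∘ e.symm)
    (e.lipschitz.isBounded_image hs) (fun x hx => ?_) (fun x => ?_) ?_
  · rw [Function.comp_apply, Function.comp_apply, hGs _ fun h => hx ⟨_, h, e.apply_symm_apply x⟩,
      map_zero]
  · exact e.hasFDerivAt.comp x ((hG _).hasFDerivAt.comp x e.symm.hasFDerivAt)
  · simp only [hdiv]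
    exact (he.integrable_comp_emb e.symm.toHomeomorph.measurableEmbedding).mpr hi

theorem hasFDerivAt_indicator_sq_smul {E F : Type*} [NormedAddCommGroup E] [NormedSpace ℝ E]
    [NormedAddCommGroup F] [NormedSpace ℝ F] {s : Set E} {u : E → ℝ} {V : E → F} {x : E}
    {M : ℝ} (hx : x ∉ s) (hu : u =O[𝓝[s] x] fun y => y - x) (hV : ∀ y ∈ s, ‖V y‖ ≤ M) :
    HasFDerivAt (s.indicator fun y => u y ^ 2 • V y) (0 : E →L[ℝ] F) x := by
  refine .of_isLittleO ?_
  simp only [indicator_of_notMem hx, sub_zero, zero_apply]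
  rw [← nhdsWithin_univ, ← union_compl_self s, nhdsWithin_union]
  refine .sup ?_ ?_
  · have hu0 : u =o[𝓝[s] x] (fun _ => (1 : ℝ)) :=
      (isLittleO_one_iff ℝ).mpr (hu.trans_tendsto (tendsto_sub_nhds_zero_iff.mpr
        (tendsto_nhdsWithin_of_tendsto_nhds tendsto_id)))
    have hu2 : (fun y => u y ^ 2) =o[𝓝[s] x] fun y => y - x := by
      simpa [sq] using (hu0.mul_isBigO hu.norm_right).norm_right
    refine IsBigO.trans_isLittleO ?_ hu2
    refine .of_bound M (eventually_nhdsWithin_of_forall fun y hy => ?_)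
    rw [indicator_of_mem hy, norm_smul, mul_comm]
    exact mul_le_mul_of_nonneg_right (hV y hy) (norm_nonneg _)
  · exact (isLittleO_zero _ _).congr' (eventually_nhdsWithin_of_forall fun y hy =>
      (indicator_of_notMem hy _).symm) .rfl

theorem vdiv_smul {N : ℕ} {f : EuclideanSpace ℝ (Fin N) → ℝ}
    {V : EuclideanSpace ℝ (Fin N) → EuclideanSpace ℝ (Fin N)} {x : EuclideanSpace ℝ (Fin N)}
    (hf : DifferentiableAt ℝ f x) (hV : DifferentiableAt ℝ V x) :
    vdiv (fun y => f y • V y) x = f x * vdiv V x + fderiv ℝ f x (V x) := by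
  have hsum : ∑ i, fderiv ℝ f x (EuclideanSpace.single i 1) * V x i = fderiv ℝ f x (V x) := by
    conv_rhs => rw [← (EuclideanSpace.basisFun (Fin N) ℝ).sum_repr (V x)]
    simp [mul_comm]
  simp [vdiv, fderiv_fun_smul hf hV, Finset.sum_add_distrib, Finset.mul_sum, hsum]

theorem abs_two_mul_mul_apply_le {E : Type*} [NormedAddCommGroup E] [NormedSpace ℝ E]
    (a : ℝ) (L : E →L[ℝ] ℝ) {v : E} {M s : ℝ} (hv : ‖v‖ ≤ M) (hs : 0 < s) :
    |2 * a * L v| ≤ M * (s * a ^ 2 + ‖L‖ ^ 2 / s) := by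
  have hM : 0 ≤ M := (norm_nonneg v).trans hv
  have young : 2 * |a| * ‖L‖ ≤ s * a ^ 2 + ‖L‖ ^ 2 / s := by
    have hsq : s * a ^ 2 + ‖L‖ ^ 2 / s - 2 * |a| * ‖L‖ = (s * |a| - ‖L‖) ^ 2 / s := by
      field_simp
      rw [← sq_abs a]
      ring
    linarith [hsq ▸ (by positivity : 0 ≤ (s * |a| - ‖L‖) ^ 2 / s)]
  calc |2 * a * L v| = 2 * |a| * ‖L v‖ := by rw [abs_mul, abs_mul, abs_two, Real.norm_eq_abs]
    _ ≤ 2 * |a| * (‖L‖ * M) := by gcongr; exact (L.le_opNorm v).trans (by gcongr)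
    _ = M * (2 * |a| * ‖L‖) := by ring
    _ ≤ M * (s * a ^ 2 + ‖L‖ ^ 2 / s) := by gcongr

theorem norm_inv_sq_smul_le {E : Type*} [NormedAddCommGroup E] [NormedSpace ℝ E] {a t G : ℝ}
    {v : E} (ha : 0 < a) (hat : a ≤ t) (hv : ‖v‖ ≤ G) : ‖(t ^ 2)⁻¹ • v‖ ≤ G / a ^ 2 := by
  rw [norm_smul, norm_inv, norm_pow, Real.norm_of_nonneg (ha.le.trans hat), inv_mul_eq_div]
  exact div_le_div₀ ((norm_nonneg v).trans hv) hv (by positivity)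
    (pow_le_pow_left₀ ha.le hat 2)

theorem div_le_setIntegral_div {X : Type*} [MeasurableSpace X] {μ : Measure X} {s : Set X}
    {f g : X → ℝ} {a b : ℝ} (hs : MeasurableSet s) (hf : IntegrableOn f s μ)
    (hf0 : ∀ x ∈ s, 0 ≤ f x) (hg : AEMeasurable g (μ.restrict s)) (ha : 0 < a)
    (hga : ∀ x ∈ s, a ≤ g x) (hgb : ∀ x ∈ s, g x ≤ b) :
    (∫ x in s, f x ∂μ) / b ≤ ∫ x in s, f x / g x ∂μ := by
  have hint : IntegrableOn (fun x => f x / g x) s μ := by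
    refine (hf.div_const a).mono' (hf.aemeasurable.div hg).aestronglyMeasurable ?_
    filter_upwards [ae_restrict_mem hs] with x hx
    rw [norm_div, Real.norm_of_nonneg (hf0 x hx), Real.norm_of_nonneg (ha.le.trans (hga x hx))]
    exact div_le_div_of_nonneg_left (hf0 x hx) ha (hga x hx)
  rw [← integral_div]
  exact setIntegral_mono_on (hf.div_const b) hint hs fun x hx =>
    div_le_div_of_nonneg_left (hf0 x hx) (ha.trans_le (hga x hx)) (hgb x hx)

theorem ContDiffOn.differentiableOn_gradient {F : Type*} [NormedAddCommGroup F]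
    [InnerProductSpace ℝ F] [CompleteSpace F] {f : F → ℝ} {s : Set F} (hf : ContDiffOn ℝ 2 f s)
    (hs : IsOpen s) : DifferentiableOn ℝ (gradient f) s :=
  (InnerProductSpace.toDual ℝ F).symm.toContinuousLinearEquiv.differentiable.comp_differentiableOn
    ((hf.fderiv_of_isOpen hs (by norm_num : (1 : WithTop ℕ∞) + 1 ≤ 2)).differentiableOn
      one_ne_zero)

theorem ContDiffOn.differentiableOn_inv_sq_smul_gradient {F : Type*} [NormedAddCommGroup F]
    [InnerProductSpace ℝ F] [CompleteSpace F] {c : F → ℝ} {s : Set F} {α : ℝ}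
    (hc : ContDiffOn ℝ 2 c s) (hs : IsOpen s) (hcα : ∀ x ∈ s, c x + α ≠ 0) :
    DifferentiableOn ℝ (fun y => ((c y + α) ^ 2)⁻¹ • gradient c y) s :=
  (((hc.differentiableOn (by norm_num)).add_const α).pow 2).inv
    (fun x hx => pow_ne_zero 2 (hcα x hx)) |>.smul (hc.differentiableOn_gradient hs)

section IndicatorSqSmul

variable {N : ℕ} {Ω : Set (EuclideanSpace ℝ (Fin N))} {u : EuclideanSpace ℝ (Fin N) → ℝ}
  {V : EuclideanSpace ℝ (Fin N) → EuclideanSpace ℝ (Fin N)} {x : EuclideanSpace ℝ (Fin N)}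

theorem hasFDerivAt_indicator_sq_smul_of_notMem (hΩ : IsOpen Ω)
    (hu : DifferentiableOn ℝ u (closure Ω)) (hu0 : ∀ y ∈ frontier Ω, u y = 0) {M : ℝ}
    (hVM : ∀ y ∈ Ω, ‖V y‖ ≤ M) (hx : x ∉ Ω) :
    HasFDerivAt (Ω.indicator fun y => u y ^ 2 • V y) (0 : _ →L[ℝ] _) x := by
  refine hasFDerivAt_indicator_sq_smul hx ?_ hVM
  by_cases hxc : x ∈ closure Ω
  · have hux : u x = 0 := hu0 x ⟨hxc, by rwa [hΩ.interior_eq]⟩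
    simpa [hux] using ((hu x hxc).hasFDerivWithinAt.isBigO_sub).mono
      (nhdsWithin_mono x subset_closure)
  · rw [notMem_closure_iff_nhdsWithin_eq_bot.mp hxc]
    exact isBigO_bot (f := u) (g := fun y => y - x)

theorem vdiv_indicator_sq_smul_of_mem (hΩ : IsOpen Ω) (hu : DifferentiableAt ℝ u x)
    (hV : DifferentiableAt ℝ V x) (hx : x ∈ Ω) :
    vdiv (Ω.indicator fun y => u y ^ 2 • V y) x
      = u x ^ 2 * vdiv V x + 2 * u x * fderiv ℝ u x (V x) := by
  have hloc : (Ω.indicator fun y => u y ^ 2 • V y) =ᶠ[𝓝 x] fun y => u y ^ 2 • V y :=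
    eventuallyEq_of_mem (hΩ.mem_nhds hx) fun y hy => indicator_of_mem hy _
  have hpow : fderiv ℝ (fun y => u y ^ 2) x = (2 * u x) • fderiv ℝ u x := by
    simp [fderiv_fun_pow 2 hu]
  rw [vdiv, hloc.fderiv_eq, ← vdiv, vdiv_smul (f := fun y => u y ^ 2) (hu.pow 2) hV, hpow]
  simp [mul_assoc]

theorem integral_sq_mul_neg_vdiv_le (hΩ : IsOpen Ω) (hΩb : IsBounded Ω)
    (hu : DifferentiableOn ℝ u (closure Ω)) (hu0 : ∀ y ∈ frontier Ω, u y = 0)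
    (hV : DifferentiableOn ℝ V Ω) {M s : ℝ} (hVM : ∀ y ∈ Ω, ‖V y‖ ≤ M) (hs : 0 < s)
    (hu2 : IntegrableOn (fun y => u y ^ 2) Ω)
    (hgu : IntegrableOn (fun y => ‖gradient u y‖ ^ 2) Ω)
    (hi : IntegrableOn (fun y => u y ^ 2 * -vdiv V y) Ω) :
    ∫ y in Ω, u y ^ 2 * -vdiv V y
      ≤ M * (s * (∫ y in Ω, u y ^ 2) + (∫ y in Ω, ‖gradient u y‖ ^ 2) / s) := by
  set G := Ω.indicator fun y => u y ^ 2 • V y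
  set Φ := fun y => 2 * u y * fderiv ℝ u y (V y)
  have hdiff : ∀ y ∈ Ω, DifferentiableAt ℝ u y ∧ DifferentiableAt ℝ V y := fun y hy =>
    ⟨(hu y (subset_closure hy)).differentiableAt
      (mem_of_superset (hΩ.mem_nhds hy) subset_closure), hV.differentiableAt (hΩ.mem_nhds hy)⟩
  have hGΩ : ∀ y ∈ Ω, vdiv G y = u y ^ 2 * vdiv V y + Φ y := fun y hy =>
    vdiv_indicator_sq_smul_of_mem hΩ (hdiff y hy).1 (hdiff y hy).2 hy
  have hGΩc : ∀ y ∉ Ω, vdiv G y = 0 := fun y hy => by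
    rw [vdiv, (hasFDerivAt_indicator_sq_smul_of_notMem hΩ hu hu0 hVM hy).fderiv]
    simp
  have hG : Differentiable ℝ G := fun y => by
    by_cases hy : y ∈ Ω
    · exact (((hdiff y hy).1.pow 2).smul (hdiff y hy).2).congr_of_eventuallyEq
        (eventuallyEq_of_mem (hΩ.mem_nhds hy) fun z hz => indicator_of_mem hz _)
    · exact (hasFDerivAt_indicator_sq_smul_of_notMem hΩ hu hu0 hVM hy).differentiableAt
  have hbound : IntegrableOn (fun y => M * (s * u y ^ 2 + ‖gradient u y‖ ^ 2 / s)) Ω :=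
    ((hu2.const_mul s).add (hgu.div_const s)).const_mul M
  have hΦ : ∀ y ∈ Ω, |Φ y| ≤ M * (s * u y ^ 2 + ‖gradient u y‖ ^ 2 / s) := fun y hy => by
    simpa [Φ, gradient] using abs_two_mul_mul_apply_le (u y) (fderiv ℝ u y) (hVM y hy) hs
  have hΦ_int : IntegrableOn Φ Ω := by
    refine hbound.mono' ?_ ((ae_restrict_mem hΩ.measurableSet).mono fun y hy => hΦ y hy)
    refine ((measurable_vdiv G).aestronglyMeasurable.add hi.aestronglyMeasurable).congr ?_
    filter_upwards [ae_restrict_mem hΩ.measurableSet] with y hy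
    simp [hGΩ y hy]
  have hGint : Integrable (vdiv G) := by
    have hsupp : Function.support (vdiv G) ⊆ Ω := fun y hy => by_contra fun h => hy (hGΩc y h)
    rw [← integrableOn_iff_integrable_of_support_subset hsupp]
    exact (hi.neg.add hΦ_int).congr_fun (fun y hy => by simp [hGΩ y hy]) hΩ.measurableSet
  have hzero : ∫ y in Ω, vdiv G y = 0 := by
    rw [setIntegral_eq_integral_of_forall_compl_eq_zero hGΩc]
    exact integral_vdiv_eq_zero_of_isBounded hΩb (fun y hy => indicator_of_notMem hy _) hG hGint
  calc ∫ y in Ω, u y ^ 2 * -vdiv V y = ∫ y in Ω, Φ y := by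
        rw [← sub_zero (∫ y in Ω, Φ y), ← hzero, ← integral_sub hΦ_int hGint.integrableOn]
        exact setIntegral_congr_fun hΩ.measurableSet fun y hy => by simp [hGΩ y hy]
    _ ≤ ∫ y in Ω, M * (s * u y ^ 2 + ‖gradient u y‖ ^ 2 / s) :=
        setIntegral_mono_on hΦ_int hbound hΩ.measurableSet fun y hy =>
          (le_abs_self _).trans (hΦ y hy)
    _ = M * (s * (∫ y in Ω, u y ^ 2) + (∫ y in Ω, ‖gradient u y‖ ^ 2) / s) := by
        rw [integral_const_mul, integral_add (hu2.const_mul s) (hgu.div_const s),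
          integral_const_mul, integral_div]

end IndicatorSqSmul

theorem eigenvalue_lower_bound_general {N : ℕ} (Ω : Set (EuclideanSpace ℝ (Fin N)))
    (hΩ : IsOpen Ω) (hΩb : Bornology.IsBounded Ω)
    (c : EuclideanSpace ℝ (Fin N) → ℝ) (hc : ContDiffOn ℝ 2 c (closure Ω))
    (cL cM Gc : ℝ) (hcL : 0 < cL) (hcLcM : cL ≤ cM)
    (hcL' : ∀ x ∈ closure Ω, cL ≤ c x) (hcM : ∀ x ∈ closure Ω, c x ≤ cM)
    (hGc : ∀ x ∈ closure Ω, ‖gradient c x‖ ≤ Gc)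
    (lam1 : ℝ) (hlam1 : 0 < lam1)
    (α : ℝ) (hα : 0 < α)
    (u : EuclideanSpace ℝ (Fin N) → ℝ) (hu : ContDiffOn ℝ 2 u (closure Ω))
    (hubd : ∀ x ∈ frontier Ω, u x = 0)
    (hPoincare : lam1 * ∫ x in Ω, u x ^ 2 ≤ ∫ x in Ω, ‖gradient u x‖ ^ 2)
    (hnorm : ∫ x in Ω, ‖gradient u x‖ ^ 2 = α)
    (hden : 0 < ∫ x in Ω, u x ^ 2 * (-vdiv (fun y => ((c y + α) ^ 2)⁻¹ • gradient c y) x))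
    (lamα : ℝ)
    (hlamα : lamα = (∫ x in Ω, ‖gradient u x‖ ^ 2 / (c x + α)) /
      ∫ x in Ω, u x ^ 2 * (-vdiv (fun y => ((c y + α) ^ 2)⁻¹ • gradient c y) x)) :
    Real.sqrt lam1 * (cL + α) ^ 2 / (2 * Gc * (cM + α)) ≤ lamα := by
  have hcα : ∀ x ∈ Ω, cL + α ≤ c x + α := fun x hx => by linarith [hcL' x (subset_closure hx)]
  have hu2 : IntegrableOn (fun x => u x ^ 2) Ω :=
    ((hu.continuousOn.pow 2).integrableOn_compact hΩb.isCompact_closure).mono_set subset_closure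
  have hgu : IntegrableOn (fun x => ‖gradient u x‖ ^ 2) Ω :=
    .of_integral_ne_zero (hnorm ▸ hα.ne')
  have hden_le := integral_sq_mul_neg_vdiv_le hΩ hΩb (hu.differentiableOn (by norm_num)) hubd
    ((hc.mono subset_closure).differentiableOn_inv_sq_smul_gradient hΩ
      fun x hx => by linarith [hcα x hx])
    (fun x hx => norm_inv_sq_smul_le (by linarith) (hcα x hx) (hGc x (subset_closure hx)))
    (Real.sqrt_pos.mpr hlam1) hu2 hgu (.of_integral_ne_zero hden.ne')
  have hnum := div_le_setIntegral_div (g := fun x => c x + α) (b := cM + α) hΩ.measurableSet hgu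
    (fun x _ => by positivity) ((hc.continuousOn.mono subset_closure).add continuousOn_const
      |>.aemeasurable hΩ.measurableSet) (by linarith) hcα
    (fun x hx => by linarith [hcM x (subset_closure hx)])
  set s := Real.sqrt lam1
  have hs : 0 < s := Real.sqrt_pos.mpr hlam1
  have hPoincare' : s * ∫ x in Ω, u x ^ 2 ≤ α / s := by
    rw [le_div_iff₀ hs, mul_right_comm, Real.mul_self_sqrt hlam1.le, ← hnorm]
    exact hPoincare
  rw [hnorm] at hden_le hnum
  have hM : 0 < Gc / (cL + α) ^ 2 := pos_of_mul_pos_left (hden.trans_le hden_le) (by positivity)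
  have hden_le' : _ ≤ Gc / (cL + α) ^ 2 * (2 * α / s) :=
    hden_le.trans (by rw [two_mul, add_div]; gcongr)
  have hGc0 : 0 < Gc := (div_pos_iff_of_pos_right (by positivity)).mp hM
  have hcMα : 0 < cM + α := by linarith
  rw [hlamα]
  calc s * (cL + α) ^ 2 / (2 * Gc * (cM + α))
      = α / (cM + α) / (Gc / (cL + α) ^ 2 * (2 * α / s)) := by field_simp
    _ ≤ _ := div_le_div₀ ((by positivity : 0 ≤ α / (cM + α)).trans hnum) hnum hden hden_le'

/-- Corollary 3.6: lower bound for the eigenvalue λ_α. -/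
theorem eigenvalue_lower_bound {N : ℕ} (Ω : Set (EuclideanSpace ℝ (Fin N)))
    (hΩ : IsOpen Ω) (hΩb : Bornology.IsBounded Ω)
    (c : EuclideanSpace ℝ (Fin N) → ℝ) (hc : ContDiffOn ℝ 2 c (closure Ω))
    (cL cM Gc : ℝ) (hcL : 0 < cL) (hcLcM : cL ≤ cM)
    (hcL' : ∀ x ∈ closure Ω, cL ≤ c x) (hcM : ∀ x ∈ closure Ω, c x ≤ cM)
    (hGc : ∀ x ∈ closure Ω, ‖gradient c x‖ ≤ Gc)
    (lam1 : ℝ) (hlam1 : 0 < lam1)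
    (α : ℝ) (hα : 0 < α)
    (u : EuclideanSpace ℝ (Fin N) → ℝ) (hu : ContDiffOn ℝ 2 u (closure Ω))
    (hubd : ∀ x ∈ frontier Ω, u x = 0) (hupos : ∀ x ∈ Ω, 0 < u x)
    (hPoincare : lam1 * ∫ x in Ω, u x ^ 2 ≤ ∫ x in Ω, ‖gradient u x‖ ^ 2)
    (hnorm : ∫ x in Ω, ‖gradient u x‖ ^ 2 = α)
    (hden : 0 < ∫ x in Ω, u x ^ 2 * (-vdiv (fun y => ((c y + α) ^ 2)⁻¹ • gradient c y) x))
    (lamα : ℝ)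
    (hlamα : lamα = (∫ x in Ω, ‖gradient u x‖ ^ 2 / (c x + α)) /
      ∫ x in Ω, u x ^ 2 * (-vdiv (fun y => ((c y + α) ^ 2)⁻¹ • gradient c y) x)) :
    Real.sqrt lam1 * (cL + α) ^ 2 / (2 * Gc * (cM + α)) ≤ lamα :=
  eigenvalue_lower_bound_general Ω hΩ hΩb c hc cL cM Gc hcL hcLcM hcL' hcM hGc lam1 hlam1 α hα u hu
    hubd hPoincare hnorm hden lamα hlamα
end

section
/- Let a, b ∈ C²(Ω̄) be positive with c = a/b satisfying Δc ≥ 2|∇c|²/c in Ω. Then for every u ∈ C²(Ω̄) with u = 0 on ∂Ω, ∫_Ω b(x) u Δu / (a(x) + b(x)‖∇u‖₂²) dx ≤ 0. -/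
open MeasureTheory Real Set

/-! With `c = a / b`, the weight `w = b / (a + b α) = (c + α)⁻¹` is nonnegative, and the
hypothesis on `c` makes it superharmonic: `Δw = 2 |∇c|² / (c + α)³ - Δc / (c + α)² ≤ 0`.
So it suffices to show `∫_Ω w u Δu ≤ 0`.

No regularity of `∂Ω` is assumed, so instead of Green's formula we use a truncation. Let
`θ_ε = softTrunc ε` be a `C¹` truncation of the identity vanishing on `[-ε, ε]` with
`0 ≤ θ_ε' ≤ 1`, and `ψ_ε = softTruncPrimitive ε` its primitive, so `ψ_ε ≥ 0`. Since `u` is continuous up to the boundary and vanishes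
there, `{|u| ≥ ε}` is a compact subset of `Ω`, hence the field `w θ_ε(u) ∇u - ψ_ε(u) ∇w`
is `C¹` with compact support in `Ω` and its divergence
`w θ_ε'(u) |∇u|² + w θ_ε(u) Δu - ψ_ε(u) Δw` integrates to zero. Its first and last terms
are nonnegative, so `∫_Ω w θ_ε(u) Δu ≤ 0`, and dominated convergence (`|θ_ε(t)| ≤ |t|`,
`θ_ε(t) → t`) lets `ε → 0`.
-/

open Filter Topology

section SoftTrunc

variable {ε t : ℝ}

noncomputable def softTruncDeriv (ε t : ℝ) : ℝ := Real.smoothTransition (|t| / ε - 1)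

noncomputable def softTrunc (ε t : ℝ) : ℝ := ∫ s in (0 : ℝ)..t, softTruncDeriv ε s

noncomputable def softTruncPrimitive (ε t : ℝ) : ℝ := ∫ s in (0 : ℝ)..t, softTrunc ε s

lemma intervalIntegral_eq_zero_of_abs_le {f : ℝ → ℝ} (hf : ∀ s, |s| ≤ ε → f s = 0)
    (ht : |t| ≤ ε) : ∫ s in (0 : ℝ)..t, f s = 0 := by
  refine (intervalIntegral.integral_congr fun s hs => hf s ?_).trans
    intervalIntegral.integral_zero
  simpa using (abs_sub_left_of_mem_uIcc hs).trans (by simpa using ht)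

lemma continuous_softTruncDeriv : Continuous (softTruncDeriv ε) :=
  Real.smoothTransition.continuous.comp (by fun_prop)

lemma softTruncDeriv_nonneg : 0 ≤ softTruncDeriv ε t := Real.smoothTransition.nonneg _

lemma softTruncDeriv_le_one : softTruncDeriv ε t ≤ 1 := Real.smoothTransition.le_one _

lemma softTruncDeriv_eq_zero (ht : |t| ≤ ε) : softTruncDeriv ε t = 0 :=
  Real.smoothTransition.zero_of_nonpos <| by
    linarith [div_le_one_of_le₀ ht ((abs_nonneg t).trans ht)]

lemma softTruncDeriv_eq_one (hε : 0 < ε) (ht : 2 * ε ≤ |t|) : softTruncDeriv ε t = 1 :=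
  Real.smoothTransition.one_of_one_le <| by
    rw [le_sub_iff_add_le, one_add_one_eq_two, le_div_iff₀ hε]; exact ht

lemma hasDerivAt_softTrunc (t : ℝ) : HasDerivAt (softTrunc ε) (softTruncDeriv ε t) t :=
  (continuous_softTruncDeriv.integral_hasStrictDerivAt 0 t).hasDerivAt

lemma contDiff_softTrunc : ContDiff ℝ 1 (softTrunc ε) :=
  contDiff_one_iff_deriv.2 ⟨fun t => (hasDerivAt_softTrunc t).differentiableAt, by
    simpa only [funext fun t => (hasDerivAt_softTrunc (ε := ε) t).deriv]
      using continuous_softTruncDeriv⟩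

lemma softTrunc_eq_zero (ht : |t| ≤ ε) : softTrunc ε t = 0 :=
  intervalIntegral_eq_zero_of_abs_le (fun _ => softTruncDeriv_eq_zero) ht

lemma abs_softTrunc_le : |softTrunc ε t| ≤ |t| := by
  simpa [softTrunc] using intervalIntegral.norm_integral_le_of_norm_le_const
    (f := softTruncDeriv ε) (a := 0) (b := t) (C := 1) fun s _ => by
      rw [Real.norm_eq_abs, abs_of_nonneg softTruncDeriv_nonneg]; exact softTruncDeriv_le_one

lemma softTrunc_nonneg (ht : 0 ≤ t) : 0 ≤ softTrunc ε t :=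
  intervalIntegral.integral_nonneg ht fun _ _ => softTruncDeriv_nonneg

lemma softTrunc_nonpos (ht : t ≤ 0) : softTrunc ε t ≤ 0 := by
  rw [softTrunc, intervalIntegral.integral_symm, neg_nonpos]
  exact intervalIntegral.integral_nonneg ht fun _ _ => softTruncDeriv_nonneg

lemma tendsto_softTrunc (t : ℝ) : Tendsto (fun ε => softTrunc ε t) (𝓝[>] 0) (𝓝 t) := by
  have h := intervalIntegral.tendsto_integral_filter_of_dominated_convergence (a := 0) (b := t)
    (μ := volume) (l := 𝓝[>] 0) (F := softTruncDeriv) (f := fun _ => (1 : ℝ)) (fun _ => 1)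
    (Eventually.of_forall fun _ => continuous_softTruncDeriv.aestronglyMeasurable)
    (Eventually.of_forall fun _ => Eventually.of_forall fun _ _ => by
      rw [Real.norm_eq_abs, abs_of_nonneg softTruncDeriv_nonneg]; exact softTruncDeriv_le_one)
    intervalIntegrable_const
    (((Set.countable_singleton 0).ae_notMem _).mono fun s hs _ => ?_)
  · simpa [softTrunc] using h
  · have hs : 0 < |s| := abs_pos.2 hs
    refine tendsto_const_nhds.congr' ?_
    filter_upwards [Ioo_mem_nhdsGT (half_pos hs)] with ε hε
    exact (softTruncDeriv_eq_one hε.1 (by linarith [hε.2])).symm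

lemma hasDerivAt_softTruncPrimitive (t : ℝ) :
    HasDerivAt (softTruncPrimitive ε) (softTrunc ε t) t :=
  (contDiff_softTrunc.continuous.integral_hasStrictDerivAt 0 t).hasDerivAt

lemma contDiff_softTruncPrimitive : ContDiff ℝ 1 (softTruncPrimitive ε) :=
  contDiff_one_iff_deriv.2 ⟨fun t => (hasDerivAt_softTruncPrimitive t).differentiableAt, by
    simpa only [funext fun t => (hasDerivAt_softTruncPrimitive (ε := ε) t).deriv]
      using contDiff_softTrunc.continuous⟩

lemma softTruncPrimitive_eq_zero (ht : |t| ≤ ε) : softTruncPrimitive ε t = 0 :=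
  intervalIntegral_eq_zero_of_abs_le (fun _ => softTrunc_eq_zero) ht

lemma softTruncPrimitive_nonneg : 0 ≤ softTruncPrimitive ε t := by
  rcases le_total 0 t with ht | ht
  · exact intervalIntegral.integral_nonneg ht fun _ hs => softTrunc_nonneg hs.1
  · rw [softTruncPrimitive, intervalIntegral.integral_symm, ← intervalIntegral.integral_neg]
    exact intervalIntegral.integral_nonneg ht fun _ hs => neg_nonneg.2 (softTrunc_nonpos hs.2)

end SoftTrunc

section VectorCalculus

variable {N : ℕ}

local notation "E" => EuclideanSpace ℝ (Fin N)

lemma sum_apply_single_mul_apply (L : StrongDual ℝ E) (v : E) :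
    ∑ i, L (EuclideanSpace.single i 1) * v i = L v := by
  conv_rhs => rw [← (EuclideanSpace.basisFun (Fin N) ℝ).sum_repr v]
  simp [mul_comm]

lemma Filter.EventuallyEq.vdiv_eq {V W : E → E} {x : E} (h : V =ᶠ[𝓝 x] W) :
    vdiv V x = vdiv W x := by
  simp only [vdiv, h.fderiv_eq]

lemma Filter.EventuallyEq.lap_eq {f g : E → ℝ} {x : E} (h : f =ᶠ[𝓝 x] g) :
    lap f x = lap g x :=
  h.gradient.vdiv_eq

lemma vdiv_sub {V W : E → E} {x : E} (hV : DifferentiableAt ℝ V x)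
    (hW : DifferentiableAt ℝ W x) :
    vdiv (fun y => V y - W y) x = vdiv V x - vdiv W x := by
  simp [vdiv, fderiv_fun_sub hV hW, Finset.sum_sub_distrib]

lemma vdiv_smul_s13 {c : E → ℝ} {c' : StrongDual ℝ E} {V : E → E} {x : E}
    (hc : HasFDerivAt c c' x) (hV : DifferentiableAt ℝ V x) :
    vdiv (fun y => c y • V y) x = c' (V x) + c x * vdiv V x := by
  have h : HasFDerivAt (fun y => c y • V y) (c x • fderiv ℝ V x + c'.smulRight (V x)) x :=
    hc.smul hV.hasFDerivAt
  rw [vdiv, h.fderiv, ← sum_apply_single_mul_apply c' (V x), vdiv, Finset.mul_sum,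
    ← Finset.sum_add_distrib]
  simp [add_comm]

lemma HasDerivAt.gradient_comp {φ : ℝ → ℝ} {φ' : ℝ} {f : E → ℝ} {x : E}
    (hφ : HasDerivAt φ φ' (f x)) (hf : DifferentiableAt ℝ f x) :
    gradient (fun y => φ (f y)) x = φ' • gradient f x := by
  have h : HasFDerivAt (fun y => φ (f y)) (φ' • fderiv ℝ f x) x :=
    hφ.comp_hasFDerivAt x hf.hasFDerivAt
  rw [gradient, h.fderiv, map_smul, gradient]

lemma contDiffOn_gradient {f : E → ℝ} {s : Set E} {n : WithTop ℕ∞} (hs : IsOpen s)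
    (hf : ContDiffOn ℝ (n + 1) f s) : ContDiffOn ℝ n (gradient f) s :=
  (InnerProductSpace.toDual ℝ E).symm.toContinuousLinearEquiv.contDiff.comp_contDiffOn
    (hf.fderiv_of_isOpen hs le_rfl)

lemma ContDiffAt.differentiableAt_gradient {f : E → ℝ} {x : E} (hf : ContDiffAt ℝ 2 f x) :
    DifferentiableAt ℝ (gradient f) x :=
  ((InnerProductSpace.toDual ℝ E).symm.toContinuousLinearEquiv.contDiff.contDiffAt.comp x
    (hf.fderiv_right (m := 1) le_rfl)).differentiableAt one_ne_zero

lemma continuousOn_vdiv {V : E → E} {s : Set E} (hs : IsOpen s) (hV : ContDiffOn ℝ 1 V s) :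
    ContinuousOn (vdiv V) s :=
  continuousOn_finsetSum _ fun i _ => (EuclideanSpace.proj i).continuous.comp_continuousOn
    ((hV.continuousOn_fderiv_of_isOpen hs le_rfl).clm_apply continuousOn_const)

lemma continuousOn_lap {f : E → ℝ} {s : Set E} (hs : IsOpen s) (hf : ContDiffOn ℝ 2 f s) :
    ContinuousOn (lap f) s :=
  continuousOn_vdiv hs (contDiffOn_gradient hs hf)

lemma fderiv_apply_gradient_comm {f g : E → ℝ} {x : E} :
    fderiv ℝ f x (gradient g x) = fderiv ℝ g x (gradient f x) := by
  rw [← inner_gradient_left, ← inner_gradient_left, real_inner_comm]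

lemma fderiv_apply_gradient_self {f : E → ℝ} {x : E} :
    fderiv ℝ f x (gradient f x) = ‖gradient f x‖ ^ 2 := by
  rw [← inner_gradient_left, real_inner_self_eq_norm_sq]

lemma lap_comp {φ φ' : ℝ → ℝ} {φ'' : ℝ} {f : E → ℝ} {x : E} (hf : ContDiffAt ℝ 2 f x)
    (hφ : ∀ᶠ t in 𝓝 (f x), HasDerivAt φ (φ' t) t) (hφ' : HasDerivAt φ' φ'' (f x)) :
    lap (fun y => φ (f y)) x = φ'' * ‖gradient f x‖ ^ 2 + φ' (f x) * lap f x := by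
  have hgrad : (gradient fun y => φ (f y)) =ᶠ[𝓝 x] fun y => φ' (f y) • gradient f y := by
    filter_upwards [hf.continuousAt.eventually hφ, hf.eventually (by simp)] with y hφy hfy
    exact hφy.gradient_comp (hfy.differentiableAt two_ne_zero)
  have hφ'f : HasFDerivAt (fun y => φ' (f y)) (φ'' • fderiv ℝ f x) x :=
    hφ'.comp_hasFDerivAt x (hf.differentiableAt two_ne_zero).hasFDerivAt
  rw [lap, hgrad.vdiv_eq, vdiv_smul_s13 hφ'f hf.differentiableAt_gradient]
  simp [fderiv_apply_gradient_self, lap]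

lemma lap_inv_add_nonpos {c : E → ℝ} {x : E} {α : ℝ} (hc : ContDiffAt ℝ 2 c x) (hcx : 0 < c x)
    (hα : 0 ≤ α) (hcond : 2 * ‖gradient c x‖ ^ 2 / c x ≤ lap c x) :
    lap (fun y => (c y + α)⁻¹) x ≤ 0 := by
  have hcα : 0 < c x + α := by linarith
  have hφ : ∀ᶠ t in 𝓝 (c x), HasDerivAt (fun t => (t + α)⁻¹) (-((t + α) ^ 2)⁻¹) t :=
    (lt_mem_nhds (by linarith : -α < c x)).mono fun t ht =>
      (((hasDerivAt_id' t).add_const α).inv (by linarith)).congr_deriv (by simp [div_eq_mul_inv])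
  have hφ' : HasDerivAt (fun t => -((t + α) ^ 2)⁻¹) (2 / (c x + α) ^ 3) (c x) :=
    ((((hasDerivAt_id' (c x)).add_const α).fun_pow 2).fun_inv
      (by positivity)).fun_neg.congr_deriv (by field_simp; ring)
  rw [lap_comp hc hφ hφ']
  have hG : 2 * ‖gradient c x‖ ^ 2 / (c x + α) ≤ lap c x :=
    (div_le_div_of_nonneg_left (by positivity) hcx (by linarith)).trans hcond
  rw [div_le_iff₀ hcα] at hG
  have : 2 / (c x + α) ^ 3 * ‖gradient c x‖ ^ 2 + -((c x + α) ^ 2)⁻¹ * lap c x =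
      (2 * ‖gradient c x‖ ^ 2 - lap c x * (c x + α)) / (c x + α) ^ 3 := by
    field_simp
    ring
  rw [this]
  exact div_nonpos_of_nonpos_of_nonneg (by linarith) (by positivity)

lemma vdiv_smul_gradient_sub_smul_gradient {u w : E → ℝ} {x : E} {θ ψ : ℝ → ℝ} {θ' : ℝ}
    (hu : ContDiffAt ℝ 2 u x) (hw : ContDiffAt ℝ 2 w x) (hθ : HasDerivAt θ θ' (u x))
    (hψ : HasDerivAt ψ (θ (u x)) (u x)) :
    vdiv (fun y => (w y * θ (u y)) • gradient u y - ψ (u y) • gradient w y) x =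
      w x * θ' * ‖gradient u x‖ ^ 2 + w x * θ (u x) * lap u x - ψ (u x) * lap w x := by
  have hux := (hu.differentiableAt two_ne_zero).hasFDerivAt
  have hθu : HasFDerivAt (fun y => θ (u y)) (θ' • fderiv ℝ u x) x := hθ.comp_hasFDerivAt x hux
  have hwθ : HasFDerivAt (fun y => w y * θ (u y))
      (w x • θ' • fderiv ℝ u x + θ (u x) • fderiv ℝ w x) x :=
    (hw.differentiableAt two_ne_zero).hasFDerivAt.mul hθu
  have hψu : HasFDerivAt (fun y => ψ (u y)) (θ (u x) • fderiv ℝ u x) x :=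
    hψ.comp_hasFDerivAt x hux
  rw [vdiv_sub (V := fun y => (w y * θ (u y)) • gradient u y)
      (W := fun y => ψ (u y) • gradient w y)
      (hwθ.differentiableAt.smul hu.differentiableAt_gradient)
      (hψu.differentiableAt.smul hw.differentiableAt_gradient),
    vdiv_smul_s13 hwθ hu.differentiableAt_gradient, vdiv_smul_s13 hψu hw.differentiableAt_gradient]
  simp only [add_apply, smul_apply, smul_eq_mul,
    fderiv_apply_gradient_self, fderiv_apply_gradient_comm (f := w), lap]
  ring

end VectorCalculus

section Divergence

variable {N : ℕ}

local notation "E" => EuclideanSpace ℝ (Fin N)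

lemma ContDiff.continuous_vdiv {F : E → E} (hF : ContDiff ℝ 1 F) : Continuous (vdiv F) :=
  continuousOn_univ.1 (continuousOn_vdiv isOpen_univ hF.contDiffOn)

lemma support_vdiv_subset {F : E → E} : Function.support (vdiv F) ⊆ tsupport F :=
  fun x hx => support_fderiv_subset ℝ fun h => hx (by simp [vdiv, h])

theorem integral_vdiv_eq_zero {F : E → E} (hF : ContDiff ℝ 1 F) (hsupp : HasCompactSupport F) :
    ∫ x, vdiv F x = 0 := by
  have hFi : ∀ i (x : E),
      HasFDerivAt (fun y => F y i) ((EuclideanSpace.proj i).comp (fderiv ℝ F x)) x := fun i x =>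
    (EuclideanSpace.proj (𝕜 := ℝ) i).hasFDerivAt.comp x
      (hF.differentiable one_ne_zero x).hasFDerivAt
  have hint : ∀ i, Integrable (fun x => fderiv ℝ F x (EuclideanSpace.single i 1) i) := fun i =>
    ((EuclideanSpace.proj i).continuous.comp ((hF.continuous_fderiv one_ne_zero).clm_apply
      continuous_const)).integrable_of_hasCompactSupport
      ((hsupp.fderiv (𝕜 := ℝ)).mono' fun x hx => subset_tsupport _ fun h => hx (by simp [h]))
  unfold vdiv
  rw [integral_finsetSum _ fun i _ => hint i]
  refine Finset.sum_eq_zero fun i _ => ?_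
  -- integrate `∂ᵢ Fᵢ` by parts against the constant function `1`
  have hFint : Integrable (fun x => F x i) :=
    ((EuclideanSpace.proj i).continuous.comp hF.continuous).integrable_of_hasCompactSupport
      (hsupp.comp_left (g := EuclideanSpace.proj i) (map_zero _))
  have := integral_mul_fderiv_eq_neg_fderiv_mul_of_integrable (f := fun _ => (1 : ℝ))
    (g := fun y => F y i) (v := EuclideanSpace.single i 1) (μ := volume)
    (by simp) (by simpa [(hFi i _).fderiv] using hint i)
    (by simpa using hFint)
    (fun _ _ => differentiableAt_const _) (fun x _ => (hFi i x).differentiableAt)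
  simpa [(hFi i _).fderiv] using this

end Divergence

lemma ContDiffOn.contDiff_indicator {E F : Type*} [NormedAddCommGroup E] [NormedSpace ℝ E]
    [NormedAddCommGroup F] [NormedSpace ℝ F] {U K : Set E} {f : E → F} {n : WithTop ℕ∞}
    (hf : ContDiffOn ℝ n f U) (hU : IsOpen U) (hK : IsClosed K) (hKU : K ⊆ U)
    (hfK : ∀ x ∈ U \ K, f x = 0) : ContDiff ℝ n (U.indicator f) := by
  refine contDiff_iff_contDiffAt.2 fun x => ?_
  by_cases hx : x ∈ U
  · refine (hf.contDiffAt (hU.mem_nhds hx)).congr_of_eventuallyEq ?_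
    filter_upwards [hU.mem_nhds hx] with y hy using indicator_of_mem hy f
  · refine (contDiffAt_const (c := (0 : F))).congr_of_eventuallyEq ?_
    filter_upwards [hK.isOpen_compl.mem_nhds fun h => hx (hKU h)] with y hy
    by_cases hyU : y ∈ U
    · rw [indicator_of_mem hyU, hfK y ⟨hyU, hy⟩]
    · exact indicator_of_notMem hyU f

lemma isCompact_closure_inter_setOf_le_abs {X : Type*} [PseudoMetricSpace X] [ProperSpace X]
    {Ω : Set X} {u : X → ℝ} (hΩb : Bornology.IsBounded Ω) (hu : ContinuousOn u (closure Ω))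
    (ε : ℝ) : IsCompact (closure Ω ∩ {x | ε ≤ |u x|}) :=
  Metric.isCompact_of_isClosed_isBounded
    (hu.abs.preimage_isClosed_of_isClosed isClosed_closure isClosed_Ici)
    (hΩb.closure.subset inter_subset_left)

lemma closure_inter_setOf_le_abs_subset {X : Type*} [TopologicalSpace X] {Ω : Set X}
    {u : X → ℝ} (hΩ : IsOpen Ω)
    (hu0 : ∀ x ∈ frontier Ω, u x = 0) {ε : ℝ} (hε : 0 < ε) :
    closure Ω ∩ {x | ε ≤ |u x|} ⊆ Ω := fun x ⟨hxc, (hxε : ε ≤ |u x|)⟩ => by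
  by_contra hx
  have hxf : x ∈ frontier Ω := by rw [hΩ.frontier_eq]; exact ⟨hxc, hx⟩
  rw [hu0 x hxf, abs_zero] at hxε
  linarith

section TruncatedEnergy

variable {N : ℕ}

local notation "E" => EuclideanSpace ℝ (Fin N)

theorem exists_contDiff_vdiv_eq_softTrunc {Ω : Set E} {u w : E → ℝ} (hΩ : IsOpen Ω)
    (hΩb : Bornology.IsBounded Ω) (hu : ContDiffOn ℝ 2 u (closure Ω))
    (hu0 : ∀ x ∈ frontier Ω, u x = 0) (hw : ContDiffOn ℝ 2 w Ω) {ε : ℝ} (hε : 0 < ε) :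
    ∃ F : E → E, ContDiff ℝ 1 F ∧ HasCompactSupport F ∧ tsupport F ⊆ Ω ∧ ∀ x ∈ Ω,
      vdiv F x = w x * softTruncDeriv ε (u x) * ‖gradient u x‖ ^ 2 +
        w x * softTrunc ε (u x) * lap u x - softTruncPrimitive ε (u x) * lap w x := by
  set K := closure Ω ∩ {x | ε ≤ |u x|}
  have hK : IsCompact K := isCompact_closure_inter_setOf_le_abs hΩb hu.continuousOn ε
  have hKΩ : K ⊆ Ω := closure_inter_setOf_le_abs_subset hΩ hu0 hε
  have huΩ := hu.mono subset_closure
  set V := fun y =>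
    (w y * softTrunc ε (u y)) • gradient u y - softTruncPrimitive ε (u y) • gradient w y
  have hV : ContDiffOn ℝ 1 V Ω := by
    have h12 : (1 : WithTop ℕ∞) ≤ 2 := by norm_num
    exact (((hw.of_le h12).mul (contDiff_softTrunc.comp_contDiffOn (huΩ.of_le h12))).smul
      (contDiffOn_gradient hΩ huΩ)).sub
      ((contDiff_softTruncPrimitive.comp_contDiffOn (huΩ.of_le h12)).smul
        (contDiffOn_gradient hΩ hw))
  have hVK : ∀ x ∈ Ω \ K, V x = 0 := fun x hx => by
    have hux : |u x| ≤ ε := (not_le.1 fun h => hx.2 ⟨subset_closure hx.1, h⟩).le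
    simp [V, softTrunc_eq_zero hux, softTruncPrimitive_eq_zero hux]
  have hFK : tsupport (Ω.indicator V) ⊆ K := closure_minimal (fun x hx => by_contra fun hxK =>
    hx <| by
      by_cases hxΩ : x ∈ Ω
      · rw [indicator_of_mem hxΩ]; exact hVK x ⟨hxΩ, hxK⟩
      · exact indicator_of_notMem hxΩ V) hK.isClosed
  refine ⟨Ω.indicator V, hV.contDiff_indicator hΩ hK.isClosed hKΩ hVK,
    hK.of_isClosed_subset (isClosed_tsupport _) hFK, hFK.trans hKΩ, fun x hx => ?_⟩
  have hFV : Ω.indicator V =ᶠ[𝓝 x] V := by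
    filter_upwards [hΩ.mem_nhds hx] with y hy using indicator_of_mem hy V
  rw [hFV.vdiv_eq]
  exact vdiv_smul_gradient_sub_smul_gradient
    (huΩ.contDiffAt (hΩ.mem_nhds hx)) (hw.contDiffAt (hΩ.mem_nhds hx))
    (hasDerivAt_softTrunc _) (hasDerivAt_softTruncPrimitive _)

theorem setIntegral_mul_softTrunc_mul_lap_nonpos {Ω : Set E} {u w : E → ℝ} (hΩ : IsOpen Ω)
    (hΩb : Bornology.IsBounded Ω) (hu : ContDiffOn ℝ 2 u (closure Ω))
    (hu0 : ∀ x ∈ frontier Ω, u x = 0) (hw : ContDiffOn ℝ 2 w Ω) (hw0 : ∀ x ∈ Ω, 0 ≤ w x)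
    (hlapw : ∀ x ∈ Ω, lap w x ≤ 0) {ε : ℝ} (hε : 0 < ε) :
    ∫ x in Ω, w x * softTrunc ε (u x) * lap u x ≤ 0 := by
  obtain ⟨F, hF, hFsupp, hFΩ, hdivF⟩ := exists_contDiff_vdiv_eq_softTrunc hΩ hΩb hu hu0 hw hε
  have hdivF_int : Integrable (vdiv F) :=
    hF.continuous_vdiv.integrable_of_hasCompactSupport (hFsupp.mono' support_vdiv_subset)
  have hdivF_zero : ∫ x in Ω, vdiv F x = 0 := by
    rw [setIntegral_eq_integral_of_forall_compl_eq_zero fun x hx => ?_,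
      integral_vdiv_eq_zero hF hFsupp]
    exact by_contra fun h => hx (hFΩ (support_vdiv_subset h))
  by_cases hint : IntegrableOn (fun x => w x * softTrunc ε (u x) * lap u x) Ω
  swap
  · exact (integral_undef hint).le
  calc ∫ x in Ω, w x * softTrunc ε (u x) * lap u x ≤ ∫ x in Ω, vdiv F x :=
        setIntegral_mono_on hint hdivF_int.integrableOn hΩ.measurableSet fun x hx => by
          have h1 : 0 ≤ w x * softTruncDeriv ε (u x) * ‖gradient u x‖ ^ 2 :=
            mul_nonneg (mul_nonneg (hw0 x hx) softTruncDeriv_nonneg) (sq_nonneg _)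
          have h2 : softTruncPrimitive ε (u x) * lap w x ≤ 0 :=
            mul_nonpos_of_nonneg_of_nonpos softTruncPrimitive_nonneg (hlapw x hx)
          rw [hdivF x hx]
          linarith
    _ = 0 := hdivF_zero

theorem setIntegral_mul_mul_lap_nonpos {Ω : Set E} {u w : E → ℝ} (hΩ : IsOpen Ω)
    (hΩb : Bornology.IsBounded Ω) (hu : ContDiffOn ℝ 2 u (closure Ω))
    (hu0 : ∀ x ∈ frontier Ω, u x = 0) (hw : ContDiffOn ℝ 2 w Ω) (hw0 : ∀ x ∈ Ω, 0 ≤ w x)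
    (hlapw : ∀ x ∈ Ω, lap w x ≤ 0) :
    ∫ x in Ω, w x * u x * lap u x ≤ 0 := by
  by_cases hint : IntegrableOn (fun x => w x * u x * lap u x) Ω
  swap
  · exact (integral_undef hint).le
  have huc : ContinuousOn u Ω := hu.continuousOn.mono subset_closure
  have hlapu : ContinuousOn (lap u) Ω := continuousOn_lap hΩ (hu.mono subset_closure)
  have hlim : Tendsto (fun ε => ∫ x in Ω, w x * softTrunc ε (u x) * lap u x) (𝓝[>] 0)
      (𝓝 (∫ x in Ω, w x * u x * lap u x)) :=
    tendsto_integral_filter_of_dominated_convergence (fun x => ‖w x * u x * lap u x‖)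
      (Eventually.of_forall fun ε => ((hw.continuousOn.mul
        (contDiff_softTrunc.continuous.comp_continuousOn huc)).mul hlapu).aestronglyMeasurable
          hΩ.measurableSet)
      (Eventually.of_forall fun ε => Eventually.of_forall fun x => by
        simp only [norm_mul]
        gcongr
        simpa using abs_softTrunc_le)
      hint.norm
      (Eventually.of_forall fun x => ((tendsto_softTrunc (u x)).const_mul (w x)).mul_const _)
  exact le_of_tendsto hlim (eventually_nhdsWithin_of_forall fun ε hε =>
    setIntegral_mul_softTrunc_mul_lap_nonpos hΩ hΩb hu hu0 hw hw0 hlapw hε)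

end TruncatedEnergy

/-- Proposition 4.6(i): if Δ(a/b) ≥ 2|∇(a/b)|²/(a/b) then ∫ buΔu/(a+b‖∇u‖₂²) ≤ 0. -/
theorem prop_four_six_i {N : ℕ} (Ω : Set (EuclideanSpace ℝ (Fin N)))
    (hΩ : IsOpen Ω) (hΩb : Bornology.IsBounded Ω)
    (a b : EuclideanSpace ℝ (Fin N) → ℝ)
    (ha : ContDiffOn ℝ 2 a (closure Ω)) (hb : ContDiffOn ℝ 2 b (closure Ω))
    (a0 b0 : ℝ) (ha0 : 0 < a0) (hb0 : 0 < b0)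
    (haa : ∀ x ∈ closure Ω, a0 ≤ a x) (hbb : ∀ x ∈ closure Ω, b0 ≤ b x)
    (hcond : ∀ x ∈ Ω,
      2 * ‖gradient (fun y => a y / b y) x‖ ^ 2 / (a x / b x) ≤
        lap (fun y => a y / b y) x) :
    ∀ u : EuclideanSpace ℝ (Fin N) → ℝ, ContDiffOn ℝ 2 u (closure Ω) →
      (∀ x ∈ frontier Ω, u x = 0) →
      ∀ α : ℝ, α = ∫ x in Ω, ‖gradient u x‖ ^ 2 →
      (∫ x in Ω, b x * u x * lap u x / (a x + b x * α)) ≤ 0 := by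
  intro u hu hu0 α hα
  have hα0 : 0 ≤ α := hα ▸ integral_nonneg fun x => by positivity
  have hapos : ∀ x ∈ Ω, 0 < a x := fun x hx => ha0.trans_le (haa x (subset_closure hx))
  have hbpos : ∀ x ∈ Ω, 0 < b x := fun x hx => hb0.trans_le (hbb x (subset_closure hx))
  have hden : ∀ x ∈ Ω, 0 < a x + b x * α := fun x hx =>
    add_pos_of_pos_of_nonneg (hapos x hx) (mul_nonneg (hbpos x hx).le hα0)
  have haΩ := ha.mono subset_closure
  have hbΩ := hb.mono subset_closure
  have hw : ContDiffOn ℝ 2 (fun x => b x / (a x + b x * α)) Ω :=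
    hbΩ.div (haΩ.add (hbΩ.mul contDiffOn_const)) fun x hx => (hden x hx).ne'
  have hlapw : ∀ x ∈ Ω, lap (fun x => b x / (a x + b x * α)) x ≤ 0 := fun x hx => by
    have hwc : (fun x => b x / (a x + b x * α)) =ᶠ[𝓝 x] fun y => (a y / b y + α)⁻¹ := by
      filter_upwards [hΩ.mem_nhds hx] with y hy
      field_simp [(hbpos y hy).ne']
    rw [hwc.lap_eq]
    exact lap_inv_add_nonpos ((haΩ.contDiffAt (hΩ.mem_nhds hx)).div
      (hbΩ.contDiffAt (hΩ.mem_nhds hx)) (hbpos x hx).ne') (div_pos (hapos x hx) (hbpos x hx))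
      hα0 (hcond x hx)
  calc ∫ x in Ω, b x * u x * lap u x / (a x + b x * α)
      = ∫ x in Ω, b x / (a x + b x * α) * u x * lap u x := by congr 1; ext x; ring
    _ ≤ 0 := setIntegral_mul_mul_lap_nonpos hΩ hΩb hu hu0 hw
      (fun x hx => (div_pos (hbpos x hx) (hden x hx)).le) hlapw
end
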